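/- arXiv:2511.10406 — 3 statements merged into one kernel-verified Lean document; each statement's English description precedes it below -/
import Mathlib

section
/- Let W: R^d → R be convex, C¹, with minimum at 0 and W(0) = min W. Define M = sup_{|y|≤1}|∇W(y)| and suppose e^{−W} is a probability density. Set R_W = d·Γ((d+1)/2)·e^{|W(0)|+M}/π^{(d−1)/2}. Then for all |x| ≥ R_W + 1, ⟨x, ∇W(x)⟩ ≥ W(x) − W(0) ≥ (M/(1+R_W))·|x|. -/
/-!
Convexity gives the gradient inequality `W 0 ≥ W x + ⟪∇W x, -x⟫`, which is the first claim, and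
on the unit ball it gives `W ≤ W 0 + M`. So the sublevel set `A = {W ≤ W 0 + M}` is convex and
contains the unit ball, while Markov's inequality for the density `e^{-W}` bounds its volume by
`e^{W 0 + M}`. A convex set containing the unit ball and a point `z` contains the cone with apex `z`
over the unit `(d-1)`-disc orthogonal to `z`, of volume `‖z‖ ω_{d-1} / d`; hence `A` lies in the
ball of radius `R_W`. For `‖x‖ ≥ R_W + 1` the point `z = (R_W + 1) / ‖x‖ • x` is therefore outside
`A`, and convexity along the segment `[0, x]` turns `W z - W 0 > M` into the linear lower bound.
-/

open MeasureTheory RealInnerProductSpace Set Metric Real Module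
open scoped Pointwise

section Gradient

variable {F : Type*} [NormedAddCommGroup F] [InnerProductSpace ℝ F] [CompleteSpace F]
  {f : F → ℝ}

theorem ConvexOn.add_inner_gradient_le (hf : ConvexOn ℝ univ f) {x : F}
    (hx : DifferentiableAt ℝ f x) (y : F) : f x + ⟪gradient f x, y - x⟫ ≤ f y := by
  set L : ℝ →ᵃ[ℝ] F := AffineMap.lineMap x y
  have hline : HasDerivAt (f ∘ L) ⟪gradient f x, y - x⟫ 0 := by
    have hx' : HasGradientAt f (gradient f x) (L 0) := by simpa [L] using hx.hasGradientAt
    simpa using hx'.hasFDerivAt.comp_hasDerivAt (0 : ℝ) AffineMap.hasDerivAt_lineMap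
  have := (hf.comp_affineMap L).le_slope_of_hasDerivAt (mem_univ 0) (mem_univ 1) one_pos hline
  simp only [slope_def_field, Function.comp_apply, L, AffineMap.lineMap_apply_zero,
    AffineMap.lineMap_apply_one, sub_zero, div_one] at this
  linarith

theorem ConvexOn.norm_gradient_le_sSup [FiniteDimensional ℝ F] (hf : ConvexOn ℝ univ f)
    {r : ℝ} {y : F} (hy : ‖y‖ ≤ r) :
    ‖gradient f y‖ ≤ sSup {s | ∃ y : F, ‖y‖ ≤ r ∧ s = ‖gradient f y‖} := by
  obtain ⟨K, hK⟩ := hf.locallyLipschitz.locallyLipschitzOn.exists_lipschitzOnWith_of_compact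
    (isCompact_closedBall (0 : F) (r + 1))
  have hbdd : BddAbove {s | ∃ y : F, ‖y‖ ≤ r ∧ s = ‖gradient f y‖} := by
    refine ⟨K, ?_⟩
    rintro _ ⟨y, hy, rfl⟩
    rw [gradient, LinearIsometryEquiv.norm_map]
    refine norm_fderiv_le_of_lipschitzOn ℝ (closedBall_mem_nhds_of_mem ?_) hK
    simpa using hy.trans_lt (lt_add_one r)
  exact le_csSup hbdd ⟨y, hy, rfl⟩

theorem ConvexOn.closedBall_subset_sublevel (hf : ConvexOn ℝ univ f) (hd : Differentiable ℝ f)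
    {r M : ℝ} (hM : ∀ y ∈ closedBall (0 : F) r, ‖gradient f y‖ ≤ M) :
    closedBall 0 r ⊆ {y | f y ≤ f 0 + r * M} := by
  intro y hy
  have hy' : ‖y‖ ≤ r := by simpa using hy
  have hgrad := hf.add_inner_gradient_le (hd y) 0
  rw [zero_sub, inner_neg_right] at hgrad
  have := real_inner_le_norm (gradient f y) y
  have := mul_le_mul (hM y hy) hy' (norm_nonneg y) ((norm_nonneg _).trans (hM y hy))
  simp only [mem_ofPred_eq]
  nlinarith

end Gradient

theorem ConvexOn.map_smul_sub_map_zero_le {E : Type*} [AddCommGroup E] [Module ℝ E] {f : E → ℝ}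
    (hf : ConvexOn ℝ univ f) (x : E) {t : ℝ} (ht0 : 0 ≤ t) (ht1 : t ≤ 1) :
    f (t • x) - f 0 ≤ t * (f x - f 0) := by
  have := hf.2 (mem_univ x) (mem_univ 0) ht0 (sub_nonneg.2 ht1) (add_sub_cancel t 1)
  simp only [smul_zero, add_zero, smul_eq_mul] at this
  linarith

theorem measure_setOf_le_le_exp {α : Type*} [MeasurableSpace α] {μ : Measure α} {W : α → ℝ}
    (hW : ∫ x, exp (-W x) ∂μ = 1) (c : ℝ) :
    μ {x | W x ≤ c} ≤ ENNReal.ofReal (exp c) := by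
  have hint : Integrable (fun x => exp (-W x)) μ := by
    by_contra hcon
    rw [integral_undef hcon] at hW
    norm_num at hW
  have markov := mul_meas_ge_le_lintegral₀
    hint.aestronglyMeasurable.aemeasurable.ennreal_ofReal (ENNReal.ofReal (exp (-c)))
  rw [← ofReal_integral_eq_lintegral_ofReal hint (ae_of_all _ fun x => (exp_pos _).le), hW,
    ENNReal.ofReal_one, mul_comm] at markov
  calc μ {x | W x ≤ c}
      ≤ μ {x | ENNReal.ofReal (exp (-c)) ≤ ENNReal.ofReal (exp (-W x))} :=
        measure_mono fun x hx => ENNReal.ofReal_le_ofReal (exp_le_exp.2 (neg_le_neg hx))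
    _ ≤ (ENNReal.ofReal (exp (-c)))⁻¹ := ENNReal.le_inv_iff_mul_le.2 markov
    _ = ENNReal.ofReal (exp c) := by
        rw [← ENNReal.ofReal_inv_of_pos (exp_pos _), ← exp_neg, neg_neg]

theorem Convex.smul_add_mem_of_closedBall_subset {E : Type*} [NormedAddCommGroup E]
    [NormedSpace ℝ E] {A : Set E} (hA : Convex ℝ A) (hB : closedBall 0 1 ⊆ A) {z w : E}
    (hz : z ∈ A) {t : ℝ} (ht0 : 0 ≤ t) (ht1 : t ≤ 1) (hw : ‖w‖ ≤ 1 - t) : t • z + w ∈ A := by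
  have hw' : w ∈ (1 - t) • A := by
    refine smul_set_mono hB ?_
    rw [_root_.smul_closedBall _ _ zero_le_one, smul_zero, Real.norm_of_nonneg (by linarith),
      mul_one]
    simpa using hw
  exact hA.set_combo_subset ht0 (by linarith) (add_sub_cancel t 1)
    (add_mem_add (smul_mem_smul_set hz) hw')

noncomputable def unitBallVolume (n : ℕ) : ℝ := √π ^ n / Gamma (n / 2 + 1)

theorem unitBallVolume_pos (n : ℕ) : 0 < unitBallVolume n := by
  unfold unitBallVolume
  have := Gamma_pos_of_pos (by positivity : (0 : ℝ) < n / 2 + 1)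
  positivity

theorem unitBallVolume_eq_rpow (n : ℕ) :
    unitBallVolume n = π ^ ((((n + 1 : ℕ) : ℝ) - 1) / 2) / Gamma ((((n + 1 : ℕ) : ℝ) + 1) / 2) := by
  rw [unitBallVolume, sqrt_eq_rpow, ← rpow_natCast, ← rpow_mul pi_pos.le]
  push_cast
  ring_nf

theorem volume_setOf_sum_sq_le (n : ℕ) {r : ℝ} (hr : 0 ≤ r) :
    volume {w : Fin n → ℝ | ∑ i, w i ^ 2 ≤ r ^ 2} =
      ENNReal.ofReal r ^ n * ENNReal.ofReal (unitBallVolume n) := by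
  cases n with
  | zero => simp [unitBallVolume, sq_nonneg, volume_pi]
  | succ m =>
    have hpre : WithLp.toLp 2 ⁻¹' closedBall (0 : EuclideanSpace ℝ (Fin (m + 1))) r =
        {w : Fin (m + 1) → ℝ | ∑ i, w i ^ 2 ≤ r ^ 2} := by
      ext w
      simp [EuclideanSpace.norm_eq, sqrt_le_left, hr]
    rw [← hpre, (PiLp.volume_preserving_toLp _).measure_preimage
      measurableSet_closedBall.nullMeasurableSet, EuclideanSpace.volume_closedBall]
    simp [unitBallVolume]

theorem intervalIntegral_one_sub_div_pow (n : ℕ) {h : ℝ} (hh : h ≠ 0) :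
    ∫ s in 0..h, (1 - s / h) ^ n = h / (n + 1) := by
  have hsub : ∀ s, (1 - s / h) ^ n = ((h - s) / h) ^ n := fun s => by
    rw [sub_div, div_self hh]
  simp_rw [hsub]
  rw [intervalIntegral.integral_comp_sub_left (fun t => (t / h) ^ n), sub_self, sub_zero,
    intervalIntegral.integral_comp_div (fun t => t ^ n) hh, zero_div, div_self hh, integral_pow]
  simp [div_eq_mul_inv]

/-- The cone with apex `(h, 0)` over the unit disc `{0} × closedBall 0 1`, base excluded. -/
def solidCone (n : ℕ) (h : ℝ) : Set (ℝ × (Fin n → ℝ)) :=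
  {p | p.1 ∈ Ioc 0 h ∧ ∑ i, p.2 i ^ 2 ≤ (1 - p.1 / h) ^ 2}

theorem measurableSet_solidCone (n : ℕ) (h : ℝ) : MeasurableSet (solidCone n h) :=
  (measurable_fst measurableSet_Ioc).inter <|
    measurableSet_le (f := fun p : ℝ × (Fin n → ℝ) => ∑ i, p.2 i ^ 2) (by fun_prop) (by fun_prop)

theorem volume_solidCone (n : ℕ) {h : ℝ} (hh : 0 < h) :
    volume (solidCone n h) = ENNReal.ofReal (h / (n + 1)) * ENNReal.ofReal (unitBallVolume n) := by
  have hslice : ∀ s, volume (Prod.mk s ⁻¹' solidCone n h) = (Ioc 0 h).indicator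
      (fun s => ENNReal.ofReal ((1 - s / h) ^ n) * ENNReal.ofReal (unitBallVolume n)) s := by
    intro s
    by_cases hs : s ∈ Ioc 0 h
    · have hr : 0 ≤ 1 - s / h := sub_nonneg.2 ((div_le_one hh).2 hs.2)
      have : Prod.mk s ⁻¹' solidCone n h = {w | ∑ i, w i ^ 2 ≤ (1 - s / h) ^ 2} := by
        ext w; simp only [solidCone, mem_preimage, mem_ofPred_eq, hs, true_and]
      rw [this, indicator_of_mem hs, volume_setOf_sum_sq_le n hr, ENNReal.ofReal_pow hr]
    · have : Prod.mk s ⁻¹' solidCone n h = ∅ := by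
        ext w
        simp only [solidCone, mem_preimage, mem_ofPred_eq, hs, false_and, mem_empty_iff_false]
      rw [this, measure_empty, indicator_of_notMem hs]
  have hnonneg : 0 ≤ᵐ[volume.restrict (Ioc 0 h)] fun s => (1 - s / h) ^ n :=
    (ae_restrict_iff' measurableSet_Ioc).2 <| ae_of_all _ fun s hs =>
      pow_nonneg (sub_nonneg.2 ((div_le_one hh).2 hs.2)) n
  rw [Measure.volume_eq_prod, Measure.prod_apply (measurableSet_solidCone n h),
    lintegral_congr hslice, lintegral_indicator measurableSet_Ioc,
    lintegral_mul_const _ (by fun_prop),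
    ← ofReal_integral_eq_lintegral_ofReal (Continuous.integrableOn_Ioc (by fun_prop)) hnonneg,
    ← intervalIntegral.integral_of_le hh.le, intervalIntegral_one_sub_div_pow n hh.ne']

theorem EuclideanSpace.norm_sub_smul_single_zero_sq {n : ℕ}
    (c : EuclideanSpace ℝ (Fin (n + 1))) :
    ‖c - c 0 • EuclideanSpace.single 0 1‖ ^ 2 = ∑ i : Fin n, c i.succ ^ 2 := by
  rw [EuclideanSpace.norm_sq_eq, Fin.sum_univ_succ]
  simp [Fin.succ_ne_zero]

section Cone

variable {E : Type*} [NormedAddCommGroup E] [InnerProductSpace ℝ E] [FiniteDimensional ℝ E]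
  {n : ℕ}

theorem exists_orthonormalBasis_apply_zero (hn : finrank ℝ E = n + 1) {u : E} (hu : ‖u‖ = 1) :
    ∃ b : OrthonormalBasis (Fin (n + 1)) ℝ E, b 0 = u := by
  have horth : Orthonormal ℝ (({0} : Set (Fin (n + 1))).domRestrict fun _ => u) := by
    refine ⟨fun _ => hu, fun i j hij => absurd ?_ hij⟩
    exact Subtype.ext (i.2.trans j.2.symm)
  obtain ⟨b, hb⟩ := horth.exists_orthonormalBasis_extension_of_card_eq (by simpa using hn)
  exact ⟨b, hb 0 rfl⟩

variable [MeasurableSpace E] [BorelSpace E]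

theorem Convex.le_volume_of_closedBall_subset (hn : finrank ℝ E = n + 1) {A : Set E}
    (hA : Convex ℝ A) (hB : closedBall 0 1 ⊆ A) {z : E} (hz : z ∈ A) :
    ENNReal.ofReal (‖z‖ / (n + 1)) * ENNReal.ofReal (unitBallVolume n) ≤ volume A := by
  rcases eq_or_ne z 0 with rfl | hz0
  · simp
  set h := ‖z‖
  have hh : 0 < h := norm_pos_iff.2 hz0
  have hu : ‖h⁻¹ • z‖ = 1 := by rw [norm_smul, norm_inv, norm_norm, inv_mul_cancel₀ hh.ne']
  obtain ⟨b, hb⟩ := exists_orthonormalBasis_apply_zero hn hu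
  -- `Φ y` = (coordinate of `y` along `z`, the remaining orthonormal coordinates)
  set Φ : E → ℝ × (Fin n → ℝ) := fun y =>
    MeasurableEquiv.piFinSuccAbove (fun _ => ℝ) 0 (b.repr y).ofLp
  have hΦ : MeasurePreserving Φ volume volume :=
    ((measurePreserving_piFinSuccAbove (fun _ => volume) 0).comp
      (EuclideanSpace.volume_preserving_symm_measurableEquiv_toLp _)).comp
        b.measurePreserving_repr
  have hsub : Φ ⁻¹' solidCone n h ⊆ A := by
    rintro y ⟨⟨hpos, hle⟩, hsq⟩
    set c := b.repr y
    have hy : y = (c 0 / h) • z + (y - c 0 • b 0) := by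
      rw [hb, smul_smul, ← div_eq_mul_inv]
      abel
    have ht1 : c 0 / h ≤ 1 := (div_le_one hh).2 hle
    rw [hy]
    refine hA.smul_add_mem_of_closedBall_subset hB hz (div_nonneg hpos.le hh.le) ht1 ?_
    rw [← b.repr.norm_map, map_sub, map_smul, b.repr_self, ← sq_le_sq₀ (norm_nonneg _)
      (sub_nonneg.2 ht1), EuclideanSpace.norm_sub_smul_single_zero_sq]
    simpa [Φ, Fin.tail] using hsq
  calc _ = volume (solidCone n h) := (volume_solidCone n hh).symm
    _ = volume (Φ ⁻¹' solidCone n h) :=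
      (hΦ.measure_preimage (measurableSet_solidCone n h).nullMeasurableSet).symm
    _ ≤ volume A := measure_mono hsub

theorem Convex.norm_le_of_closedBall_subset_of_volume_le (hn : finrank ℝ E = n + 1) {A : Set E}
    (hA : Convex ℝ A) (hB : closedBall 0 1 ⊆ A) {V : ℝ} (hV0 : 0 ≤ V)
    (hV : volume A ≤ ENNReal.ofReal V) {z : E} (hz : z ∈ A) :
    ‖z‖ ≤ (n + 1) * V / unitBallVolume n := by
  have hvol := (hA.le_volume_of_closedBall_subset hn hB hz).trans hV
  rw [← ENNReal.ofReal_mul (by positivity), ENNReal.ofReal_le_ofReal_iff hV0] at hvol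
  rw [le_div_iff₀ (unitBallVolume_pos n)]
  calc ‖z‖ * unitBallVolume n = (n + 1) * (‖z‖ / (n + 1) * unitBallVolume n) := by
        field_simp
    _ ≤ (n + 1) * V := by gcongr

theorem ConvexOn.norm_le_of_le_of_integral_exp_neg_eq_one (hn : finrank ℝ E = n + 1)
    {f : E → ℝ} (hf : ConvexOn ℝ univ f) (hdens : ∫ x, exp (-f x) = 1) {c : ℝ}
    (hB : closedBall 0 1 ⊆ {y | f y ≤ c}) {z : E} (hz : f z ≤ c) :
    ‖z‖ ≤ (n + 1) * exp c / unitBallVolume n := by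
  have hA : Convex ℝ {y | f y ≤ c} := by simpa using hf.convex_le c
  exact hA.norm_le_of_closedBall_subset_of_volume_le hn hB (exp_pos c).le
    (measure_setOf_le_le_exp hdens c) hz

end Cone

theorem convex_drift_lower_bound_general {d : ℕ}
    (W : EuclideanSpace ℝ (Fin d) → ℝ)
    (hconv : ConvexOn ℝ Set.univ W) (hW : Differentiable ℝ W)
    (M : ℝ)
    (hM : M = sSup {r | ∃ y : EuclideanSpace ℝ (Fin d), ‖y‖ ≤ 1 ∧
      r = ‖gradient W y‖})
    (hdens : ∫ x : EuclideanSpace ℝ (Fin d), Real.exp (-W x) = 1)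
    (RW : ℝ)
    (hRW : RW = d * Real.Gamma ((d + 1) / 2) * Real.exp (|W 0| + M) /
      Real.pi ^ (((d : ℝ) - 1) / 2)) :
    ∀ x : EuclideanSpace ℝ (Fin d), RW + 1 ≤ ‖x‖ →
      W x - W 0 ≤ ⟪x, gradient W x⟫ ∧
      (M / (1 + RW)) * ‖x‖ ≤ W x - W 0 := by
  intro x hx
  have hgrad := hconv.add_inner_gradient_le (hW x) 0
  rw [zero_sub, inner_neg_right, real_inner_comm] at hgrad
  refine ⟨by linarith, ?_⟩
  obtain ⟨n, rfl⟩ : ∃ n, d = n + 1 := Nat.exists_eq_succ_of_ne_zero <| by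
    rintro rfl
    norm_num [hRW, EuclideanSpace.norm_eq] at hx
  have hRW' : RW = (n + 1) * exp (|W 0| + M) / unitBallVolume n := by
    rw [hRW, unitBallVolume_eq_rpow]
    field_simp
    push_cast
    ring
  have hω := unitBallVolume_pos n
  have hRW0 : 0 ≤ RW := by rw [hRW']; exact div_nonneg (by positivity) hω.le
  have hxpos : 0 < ‖x‖ := by linarith
  set t := (RW + 1) / ‖x‖
  have ht : 0 < t := by positivity
  have hfar : W 0 + M < W (t • x) := by
    by_contra! hle
    have hB := hconv.closedBall_subset_sublevel hW fun y hy => hM ▸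
      hconv.norm_gradient_le_sSup (by simpa using hy)
    rw [one_mul] at hB
    have hnorm := hconv.norm_le_of_le_of_integral_exp_neg_eq_one finrank_euclideanSpace_fin
      hdens hB hle
    have hradius : (n + 1) * exp (W 0 + M) / unitBallVolume n ≤ RW := by
      rw [hRW']
      gcongr
      exact le_abs_self _
    rw [norm_smul, Real.norm_of_nonneg ht.le, div_mul_cancel₀ _ hxpos.ne'] at hnorm
    linarith
  have hseg := hconv.map_smul_sub_map_zero_le x ht.le ((div_le_one hxpos).2 hx)
  calc M / (1 + RW) * ‖x‖ = M / t := by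
        rw [div_div_eq_mul_div, div_mul_eq_mul_div, add_comm RW]
    _ ≤ W x - W 0 := (div_le_iff₀' ht).2 (by linarith)

theorem convex_drift_lower_bound {d : ℕ}
    (W : EuclideanSpace ℝ (Fin d) → ℝ)
    (hconv : ConvexOn ℝ Set.univ W) (hW : Differentiable ℝ W)
    (hmin : ∀ y, W 0 ≤ W y)
    (M : ℝ)
    (hM : M = sSup {r | ∃ y : EuclideanSpace ℝ (Fin d), ‖y‖ ≤ 1 ∧
      r = ‖gradient W y‖})
    (hdens : ∫ x : EuclideanSpace ℝ (Fin d), Real.exp (-W x) = 1)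
    (RW : ℝ)
    (hRW : RW = d * Real.Gamma ((d + 1) / 2) * Real.exp (|W 0| + M) /
      Real.pi ^ (((d : ℝ) - 1) / 2)) :
    ∀ x : EuclideanSpace ℝ (Fin d), RW + 1 ≤ ‖x‖ →
      W x - W 0 ≤ ⟪x, gradient W x⟫ ∧
      (M / (1 + RW)) * ‖x‖ ≤ W x - W 0 :=
  convex_drift_lower_bound_general W hconv hW M hM hdens RW hRW
end

section
/- Let π = μ * N(0, τ²Id) where μ is supported in B(0,R), and ν = N(0, σ²Id), all on R^d. For λ ∈ (0,1), let p be the density of √λ·X + √(1−λ)·Z with X ~ π, Z ~ ν independent, and set α² = σ²(1−λ) + τ²λ. Then −(1/α²)·Id ≤ ∇² ln p(x) ≤ −((α² − λR²)/α⁴)·Id for all x. -/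
/-!
Write `a = α²` and `s = √λ`. Integrating out the Gaussian noise of `π` turns `p` into a Gaussian
mixture, `p(x) ∝ ∫ exp (-‖x - s u‖² / (2a)) dμ(u)`. Expanding the square,
`p(x) ∝ exp (-‖x‖² / (2a)) · M(x)`, where `M(x) = ∫ exp ⟪x, v⟫ dν(v)` is the moment generating
function of the law `ν` of `(s / a) U`, with `U` drawn from `μ` reweighted by
`exp (-s² ‖u‖² / (2a))`. Hence `∇² log p = -Id / a + ∇² log M`, and the Hessian of a log moment
generating function is the covariance of the exponentially tilted measure `e^{⟪x, ·⟫} ν / M(x)`.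
As `ν` is supported in the ball of radius `s R / a`, that covariance lies between `0` and
`(s R / a)² Id`.
-/

open MeasureTheory ProbabilityTheory Real ContinuousLinearMap
open scoped RealInnerProductSpace

lemma integrable_exp_neg_mul_norm_sq {E : Type*} [NormedAddCommGroup E] [MeasurableSpace E]
    [OpensMeasurableSpace E] {μ : Measure E} [IsFiniteMeasure μ] {b : ℝ} (hb : 0 ≤ b) :
    Integrable (fun u => exp (-b * ‖u‖ ^ 2)) μ :=
  Integrable.of_bound (by fun_prop) 1 (.of_forall fun u => by
    rw [norm_of_nonneg (exp_pos _).le, exp_le_one_iff, neg_mul, neg_nonpos]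
    positivity)

lemma integral_exp_neg_sq_mul_exp_neg_sq_sub_smul {V : Type*} [NormedAddCommGroup V]
    [InnerProductSpace ℝ V] [MeasurableSpace V] [MeasurableAdd V] (m : Measure V)
    [m.IsAddRightInvariant] {τ t a : ℝ} (hτ : 0 < τ) (ht : 0 < t) (s : ℝ)
    (ha : a = t + s ^ 2 * τ ^ 2) (v : V) :
    ∫ w, exp (-‖w‖ ^ 2 / (2 * τ ^ 2)) * exp (-‖v - s • w‖ ^ 2 / (2 * t)) ∂m
      = (∫ w, exp (-(a / (2 * τ ^ 2 * t)) * ‖w‖ ^ 2) ∂m) * exp (-‖v‖ ^ 2 / (2 * a)) := by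
  have ha₀ : 0 < a := by rw [ha]; positivity
  have hsq : ∀ w : V, -‖w‖ ^ 2 / (2 * τ ^ 2) + -‖v - s • w‖ ^ 2 / (2 * t)
      = -(a / (2 * τ ^ 2 * t)) * ‖w - (s * τ ^ 2 / a) • v‖ ^ 2 + -‖v‖ ^ 2 / (2 * a) := by
    intro w
    simp only [norm_sub_sq_real, inner_smul_right, norm_smul, mul_pow, norm_eq_abs, sq_abs]
    rw [real_inner_comm w v, ha]
    field_simp
    ring
  simp_rw [← exp_add, hsq, exp_add]
  rw [integral_mul_const,
    integral_sub_right_eq_self (fun w => exp (-(a / (2 * τ ^ 2 * t)) * ‖w‖ ^ 2))]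

section InnerMgf

variable {E : Type*} [NormedAddCommGroup E] [InnerProductSpace ℝ E]

lemma exp_inner_le_of_norm_le {x v : E} {ρ r : ℝ} (hx : ‖x‖ ≤ ρ) (hv : ‖v‖ ≤ r) :
    exp ⟪x, v⟫ ≤ exp (ρ * r) :=
  exp_le_exp.2 <| (real_inner_le_norm x v).trans <|
    mul_le_mul hx hv (norm_nonneg v) ((norm_nonneg x).trans hx)

lemma hasFDerivAt_exp_inner_smul {F : Type*} [NormedAddCommGroup F] [NormedSpace ℝ F]
    (v : E) (f : F) (x : E) :
    HasFDerivAt (fun y => exp ⟪y, v⟫ • f) (exp ⟪x, v⟫ • (innerSL ℝ v).smulRight f) x := by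
  have h : HasFDerivAt (fun y => ⟪y, v⟫) (innerSL ℝ v) x := by
    refine (innerSL ℝ v).hasFDerivAt.congr_of_eventuallyEq (.of_forall fun y => ?_)
    simp [real_inner_comm]
  convert h.exp.smul_const f using 1
  ext; simp [smul_smul]

variable [MeasurableSpace E]

noncomputable def innerMgf (ν : Measure E) (x : E) : ℝ := ∫ v, exp ⟪x, v⟫ ∂ν

variable {ν : Measure E} {r : ℝ}

lemma ae_inner_mem_Icc_tilted (hν : ∀ᵐ v ∂ν, ‖v‖ ≤ r) (f : E → ℝ) (ξ : E) :
    ∀ᵐ v ∂(ν.tilted f), ⟪v, ξ⟫ ∈ Set.Icc (-(r * ‖ξ‖)) (r * ‖ξ‖) := by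
  refine (tilted_absolutelyContinuous ν f).ae_le (hν.mono fun v hv => ?_)
  rw [Set.mem_Icc, ← abs_le]
  exact (abs_real_inner_le_norm v ξ).trans (by gcongr)

lemma integral_tilted_inner (x : E) (g : E → ℝ) :
    ∫ v, g v ∂(ν.tilted fun v => ⟪x, v⟫) = (innerMgf ν x)⁻¹ * ∫ v, exp ⟪x, v⟫ * g v ∂ν := by
  rw [integral_tilted, ← integral_const_mul, innerMgf]
  congr with v
  rw [smul_eq_mul, div_eq_inv_mul, mul_assoc]

variable [BorelSpace E] [SecondCountableTopology E] [IsFiniteMeasure ν]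
  {F : Type*} [NormedAddCommGroup F] [NormedSpace ℝ F]

lemma integrable_exp_inner_smul (hν : ∀ᵐ v ∂ν, ‖v‖ ≤ r) {φ : E → F} (hφc : Continuous φ) {M : ℝ}
    (hφ : ∀ᵐ v ∂ν, ‖φ v‖ ≤ M) (x : E) : Integrable (fun v => exp ⟪x, v⟫ • φ v) ν := by
  refine Integrable.of_bound (by fun_prop) (exp (‖x‖ * r) * M) ?_
  filter_upwards [hν, hφ] with v hv hφv
  rw [norm_smul, norm_of_nonneg (exp_pos _).le]
  exact mul_le_mul (exp_inner_le_of_norm_le le_rfl hv) hφv (norm_nonneg _) (exp_pos _).le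

lemma hasFDerivAt_integral_exp_inner_smul [CompleteSpace F] (hν : ∀ᵐ v ∂ν, ‖v‖ ≤ r) {φ : E → F}
    (hφc : Continuous φ) {M : ℝ} (hφ : ∀ᵐ v ∂ν, ‖φ v‖ ≤ M) (x : E) :
    HasFDerivAt (fun y => ∫ v, exp ⟪y, v⟫ • φ v ∂ν)
      (∫ v, exp ⟪x, v⟫ • (innerSL ℝ v).smulRight (φ v) ∂ν) x := by
  have : SecondCountableTopologyEither E (E →L[ℝ] F) := secondCountableTopologyEither_of_left E _
  refine hasFDerivAt_integral_of_dominated_of_fderiv_le (Metric.ball_mem_nhds x one_pos)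
    (bound := fun _ => exp ((‖x‖ + 1) * r) * (r * M))
    (.of_forall fun y => by fun_prop) (integrable_exp_inner_smul hν hφc hφ x)
    (Continuous.aestronglyMeasurable (by fun_prop)) ?_
    (integrable_const _) (.of_forall fun v y _ => hasFDerivAt_exp_inner_smul v (φ v) y)
  filter_upwards [hν, hφ] with v hv hφv y hy
  have hy' : ‖y‖ ≤ ‖x‖ + 1 := by
    linarith [norm_le_norm_add_norm_sub' y x, mem_ball_iff_norm.1 hy]
  rw [norm_smul, norm_of_nonneg (exp_pos _).le, norm_smulRight_apply, innerSL_apply_norm]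
  exact mul_le_mul (exp_inner_le_of_norm_le hy' hv)
    (mul_le_mul hv hφv (norm_nonneg _) ((norm_nonneg v).trans hv)) (by positivity) (exp_pos _).le

lemma integrable_exp_inner (hν : ∀ᵐ v ∂ν, ‖v‖ ≤ r) (x : E) :
    Integrable (fun v => exp ⟪x, v⟫) ν := by
  simpa using integrable_exp_inner_smul hν (continuous_const (y := (1 : ℝ))) (M := 1)
    (.of_forall fun _ => by simp) x

lemma innerMgf_pos [NeZero ν] (hν : ∀ᵐ v ∂ν, ‖v‖ ≤ r) (x : E) : 0 < innerMgf ν x :=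
  integral_exp_pos (integrable_exp_inner hν x)

lemma hasFDerivAt_innerMgf (hν : ∀ᵐ v ∂ν, ‖v‖ ≤ r) (x : E) :
    HasFDerivAt (innerMgf ν) (∫ v, exp ⟪x, v⟫ • innerSL ℝ v ∂ν) x := by
  have h : ∀ v : E, (innerSL ℝ v).smulRight (1 : ℝ) = innerSL ℝ v := fun v => by ext; simp
  have hd := hasFDerivAt_integral_exp_inner_smul hν (continuous_const (y := (1 : ℝ))) (M := 1)
    (.of_forall fun _ => by simp) x
  simp only [h, smul_eq_mul, mul_one] at hd
  exact hd

lemma fderiv_log_innerMgf [NeZero ν] (hν : ∀ᵐ v ∂ν, ‖v‖ ≤ r) :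
    fderiv ℝ (fun y => log (innerMgf ν y))
      = fun y => (innerMgf ν y)⁻¹ • ∫ v, exp ⟪y, v⟫ • innerSL ℝ v ∂ν :=
  funext fun y => ((hasFDerivAt_innerMgf hν y).log (innerMgf_pos hν y).ne').fderiv

theorem exists_hasFDerivAt_fderiv_log_innerMgf [NeZero ν] (hν : ∀ᵐ v ∂ν, ‖v‖ ≤ r) (x : E) :
    ∃ H : E →L[ℝ] E →L[ℝ] ℝ, HasFDerivAt (fderiv ℝ fun y => log (innerMgf ν y)) H x ∧
      ∀ ξ, H ξ ξ = variance (fun v => ⟪v, ξ⟫) (ν.tilted fun v => ⟪x, v⟫) := by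
  have hinv : HasFDerivAt (fun y => (innerMgf ν y)⁻¹)
      (-((innerMgf ν x) ^ 2)⁻¹ • ∫ v, exp ⟪x, v⟫ • innerSL ℝ v ∂ν) x :=
    (hasDerivAt_inv (innerMgf_pos hν x).ne').comp_hasFDerivAt x (hasFDerivAt_innerMgf hν x)
  have hφ : ∀ᵐ v ∂ν, ‖innerSL ℝ v‖ ≤ r := hν.mono fun v hv => (innerSL_apply_norm ℝ v).trans_le hv
  rw [fderiv_log_innerMgf hν]
  refine ⟨_, hinv.smul (hasFDerivAt_integral_exp_inner_smul hν (innerSL ℝ).continuous hφ x),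
    fun ξ => ?_⟩
  have := isProbabilityMeasure_tilted (integrable_exp_inner hν x)
  have hint₁ := integrable_exp_inner_smul hν (innerSL ℝ).continuous hφ x
  have hint₂ := integrable_exp_inner_smul hν (φ := fun v => (innerSL ℝ v).smulRight (innerSL ℝ v))
    (by fun_prop) (M := r * r) (hν.mono fun v hv => by
      rw [norm_smulRight_apply, innerSL_apply_norm]
      exact mul_le_mul hv hv (norm_nonneg v) ((norm_nonneg v).trans hv)) x
  rw [variance_eq_sub (memLp_of_bounded (ae_inner_mem_Icc_tilted hν _ ξ) (by fun_prop) 2),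
    integral_tilted_inner, integral_tilted_inner]
  simp only [add_apply, smul_apply, smulRight_apply]
  rw [integral_apply hint₂, integral_apply (hint₂.apply_continuousLinearMap ξ),
    integral_apply hint₁]
  simp only [smul_apply, smulRight_apply, coe_innerSL_apply, real_inner_comm, smul_eq_mul, sq,
    mul_inv_rev, neg_mul, Pi.pow_apply]
  ring

lemma variance_inner_tilted_le [NeZero ν] (hν : ∀ᵐ v ∂ν, ‖v‖ ≤ r) (x ξ : E) :
    variance (fun v => ⟪v, ξ⟫) (ν.tilted fun v => ⟪x, v⟫) ≤ (r * ‖ξ‖) ^ 2 := by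
  have : IsProbabilityMeasure (ν.tilted fun v => ⟪x, v⟫) :=
    isProbabilityMeasure_tilted (integrable_exp_inner hν x)
  refine (variance_le_sq_of_bounded (ae_inner_mem_Icc_tilted hν (fun v => ⟪x, v⟫) ξ)
    (by fun_prop)).trans_eq ?_
  ring

end InnerMgf

section GaussianMixture

variable {E : Type*} [NormedAddCommGroup E] [InnerProductSpace ℝ E] [MeasurableSpace E]
  [BorelSpace E]

lemma integral_exp_neg_norm_sub_smul_sq (μ : Measure E) [IsFiniteMeasure μ] [NeZero μ] {a : ℝ}
    (ha : 0 < a) (c : ℝ) (x : E) :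
    ∫ u, exp (-‖x - c • u‖ ^ 2 / (2 * a)) ∂μ
      = (∫ u, exp (-(c ^ 2 / (2 * a)) * ‖u‖ ^ 2) ∂μ) * exp (-‖x‖ ^ 2 / (2 * a))
        * innerMgf ((μ.tilted fun u => -(c ^ 2 / (2 * a)) * ‖u‖ ^ 2).map ((c / a) • ·)) x := by
  have hZ := integral_exp_pos (μ := μ)
    (integrable_exp_neg_mul_norm_sq (b := c ^ 2 / (2 * a)) (by positivity))
  rw [innerMgf, integral_map (by fun_prop) (Continuous.aestronglyMeasurable (by fun_prop)),
    integral_tilted, ← integral_const_mul]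
  congr with u
  set Z := ∫ u, exp (-(c ^ 2 / (2 * a)) * ‖u‖ ^ 2) ∂μ
  have hexp : -‖x - c • u‖ ^ 2 / (2 * a)
      = -‖x‖ ^ 2 / (2 * a) + -(c ^ 2 / (2 * a)) * ‖u‖ ^ 2 + ⟪x, (c / a) • u⟫ := by
    rw [norm_sub_sq_real, inner_smul_right, inner_smul_right, norm_smul, mul_pow, norm_eq_abs,
      sq_abs]
    field_simp
    ring
  rw [hexp, exp_add, exp_add, smul_eq_mul]
  field_simp

variable [SecondCountableTopology E]

theorem iteratedFDeriv_two_log_mul_exp_mul_innerMgf {ν : Measure E} [IsFiniteMeasure ν] [NeZero ν]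
    {r : ℝ} (hν : ∀ᵐ v ∂ν, ‖v‖ ≤ r) {K : ℝ} (hK : 0 < K) (a : ℝ) (x ξ : E) :
    iteratedFDeriv ℝ 2 (fun y => log (K * exp (-‖y‖ ^ 2 / (2 * a)) * innerMgf ν y)) x ![ξ, ξ]
      = -(‖ξ‖ ^ 2 / a) + variance (fun v => ⟪v, ξ⟫) (ν.tilted fun v => ⟪x, v⟫) := by
  have hsplit : (fun y => log (K * exp (-‖y‖ ^ 2 / (2 * a)) * innerMgf ν y))
      = fun y => log K + -(2 * a)⁻¹ * ‖y‖ ^ 2 + log (innerMgf ν y) := by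
    funext y
    rw [log_mul (by positivity) (innerMgf_pos hν y).ne', log_mul hK.ne' (exp_pos _).ne', log_exp]
    ring
  have hfderiv : fderiv ℝ (fun y => log (K * exp (-‖y‖ ^ 2 / (2 * a)) * innerMgf ν y))
      = fun y => -a⁻¹ • innerSL ℝ y + fderiv ℝ (fun y => log (innerMgf ν y)) y := by
    rw [hsplit]
    funext y
    have hlog := ((hasFDerivAt_innerMgf hν y).log (innerMgf_pos hν y).ne').differentiableAt
    refine (((hasFDerivAt_const _ y).add
      ((hasStrictFDerivAt_norm_sq y).hasFDerivAt.const_mul _)).add hlog.hasFDerivAt).fderiv.trans ?_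
    congr 1
    ext z
    simp only [mul_inv_rev, neg_smul, zero_add, neg_apply, smul_apply, coe_innerSL_apply,
      nsmul_eq_mul, Nat.cast_ofNat, smul_eq_mul, neg_inj]
    ring
  obtain ⟨H, hH, hHξ⟩ := exists_hasFDerivAt_fderiv_log_innerMgf hν x
  -- `innerSL ℝ` is typed as conjugate-linear; `B` is the same map typed as bilinear.
  let B : E →L[ℝ] E →L[ℝ] ℝ := innerSL ℝ
  have hfderiv₂ : HasFDerivAt
      (fun y => -a⁻¹ • innerSL ℝ y + fderiv ℝ (fun y => log (innerMgf ν y)) y) (-a⁻¹ • B + H) x :=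
    (B.hasFDerivAt.const_smul (-a⁻¹)).add hH
  rw [iteratedFDeriv_two_apply, hfderiv, hfderiv₂.fderiv]
  change -a⁻¹ * ⟪ξ, ξ⟫ + H ξ ξ = _
  rw [real_inner_self_eq_norm_sq, hHξ]
  ring

theorem iteratedFDeriv_two_log_gaussian_mixture_bounds {μ : Measure E} [IsFiniteMeasure μ]
    [NeZero μ] {R a c K : ℝ} (hμ : ∀ᵐ u ∂μ, ‖u‖ ≤ R) (ha : 0 < a) (hK : 0 < K) (x ξ : E) :
    -(1 / a) * ‖ξ‖ ^ 2 ≤ iteratedFDeriv ℝ 2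
        (fun y => log (K * ∫ u, exp (-‖y - c • u‖ ^ 2 / (2 * a)) ∂μ)) x ![ξ, ξ] ∧
      iteratedFDeriv ℝ 2 (fun y => log (K * ∫ u, exp (-‖y - c • u‖ ^ 2 / (2 * a)) ∂μ)) x ![ξ, ξ]
        ≤ -((a - c ^ 2 * R ^ 2) / a ^ 2) * ‖ξ‖ ^ 2 := by
  have hint := integrable_exp_neg_mul_norm_sq (μ := μ) (b := c ^ 2 / (2 * a)) (by positivity)
  set ν := (μ.tilted fun u => -(c ^ 2 / (2 * a)) * ‖u‖ ^ 2).map ((c / a) • ·)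
  have := isProbabilityMeasure_tilted hint
  have : IsProbabilityMeasure ν := Measure.isProbabilityMeasure_map (by fun_prop)
  have hν : ∀ᵐ v ∂ν, ‖v‖ ≤ |c / a| * R := by
    rw [ae_map_iff (by fun_prop) (measurableSet_le (by fun_prop) (by fun_prop))]
    filter_upwards [(tilted_absolutelyContinuous μ _).ae_le hμ] with u hu
    rw [norm_smul, norm_eq_abs]
    gcongr
  have hfun : (fun y => log (K * ∫ u, exp (-‖y - c • u‖ ^ 2 / (2 * a)) ∂μ))
      = fun y => log (K * (∫ u, exp (-(c ^ 2 / (2 * a)) * ‖u‖ ^ 2) ∂μ)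
          * exp (-‖y‖ ^ 2 / (2 * a)) * innerMgf ν y) := by
    funext y
    rw [integral_exp_neg_norm_sub_smul_sq μ ha c y, mul_assoc, mul_assoc, mul_assoc]
  rw [hfun, iteratedFDeriv_two_log_mul_exp_mul_innerMgf hν (mul_pos hK (integral_exp_pos hint))]
  have hvar₀ := variance_nonneg (fun v => ⟪v, ξ⟫) (ν.tilted fun v => ⟪x, v⟫)
  have hvar := variance_inner_tilted_le hν x ξ
  have hbound : -(‖ξ‖ ^ 2 / a) + (|c / a| * R * ‖ξ‖) ^ 2
      = -((a - c ^ 2 * R ^ 2) / a ^ 2) * ‖ξ‖ ^ 2 := by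
    rw [mul_pow, mul_pow, sq_abs]
    field_simp
    ring
  constructor <;> [rw [neg_mul, one_div_mul_eq_div]; rw [← hbound]] <;> linarith

end GaussianMixture

theorem gaussian_convolution_hessian_bounds_general {d : ℕ}
    (μ : Measure (EuclideanSpace ℝ (Fin d))) [IsProbabilityMeasure μ]
    (R σ τ : ℝ) (hσ : 0 < σ) (hτ : 0 < τ)
    (hsupp : μ (Metric.closedBall (0 : EuclideanSpace ℝ (Fin d)) R)ᶜ = 0)
    (l : ℝ) (hl0 : 0 < l) (hl1 : l < 1)
    (α2 : ℝ) (hα2 : α2 = σ ^ 2 * (1 - l) + τ ^ 2 * l)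
    (p : EuclideanSpace ℝ (Fin d) → ℝ)
    (hp : ∀ x, p x = ∫ u, (∫ w : EuclideanSpace ℝ (Fin d),
      (2 * Real.pi * τ ^ 2) ^ (-(d : ℝ) / 2) *
        Real.exp (-‖w‖ ^ 2 / (2 * τ ^ 2)) *
      ((2 * Real.pi * (σ ^ 2 * (1 - l))) ^ (-(d : ℝ) / 2) *
        Real.exp (-‖x - Real.sqrt l • (u + w)‖ ^ 2 / (2 * (σ ^ 2 * (1 - l)))))) ∂μ) :
    ∀ (x ξ : EuclideanSpace ℝ (Fin d)),
      -(1 / α2) * ‖ξ‖ ^ 2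
        ≤ iteratedFDeriv ℝ 2 (fun y => Real.log (p y)) x ![ξ, ξ] ∧
      iteratedFDeriv ℝ 2 (fun y => Real.log (p y)) x ![ξ, ξ]
        ≤ -((α2 - l * R ^ 2) / α2 ^ 2) * ‖ξ‖ ^ 2 := by
  intro x ξ
  have hs : √l ^ 2 = l := sq_sqrt hl0.le
  have ht : 0 < σ ^ 2 * (1 - l) := by have := sub_pos.2 hl1; positivity
  have hα : α2 = σ ^ 2 * (1 - l) + √l ^ 2 * τ ^ 2 := by rw [hα2, hs]; ring
  have hα₀ : 0 < α2 := by rw [hα2]; positivity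
  set K := (2 * π * τ ^ 2) ^ (-(d : ℝ) / 2) * (2 * π * (σ ^ 2 * (1 - l))) ^ (-(d : ℝ) / 2)
    * ∫ w : EuclideanSpace ℝ (Fin d), exp (-(α2 / (2 * τ ^ 2 * (σ ^ 2 * (1 - l)))) * ‖w‖ ^ 2)
    with hKdef
  have hK : 0 < K := by
    rw [hKdef, GaussianFourier.integral_rexp_neg_mul_sq_norm (by positivity)]
    positivity
  have hpK : (fun y => log (p y))
      = fun y => log (K * ∫ u, exp (-‖y - √l • u‖ ^ 2 / (2 * α2)) ∂μ) := by
    funext y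
    rw [hp, ← integral_const_mul]
    congr 2 with u
    simp_rw [mul_mul_mul_comm _ (exp _), smul_add, ← sub_sub]
    rw [integral_const_mul, integral_exp_neg_sq_mul_exp_neg_sq_sub_smul volume hτ ht _ hα]
    ring
  have hμ : ∀ᵐ u ∂μ, ‖u‖ ≤ R :=
    Filter.Eventually.mono (mem_ae_iff.2 hsupp) fun u hu => mem_closedBall_zero_iff.1 hu
  rw [hpK]
  simpa only [hs] using iteratedFDeriv_two_log_gaussian_mixture_bounds (c := √l) hμ hα₀ hK x ξ

theorem gaussian_convolution_hessian_bounds {d : ℕ}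
    (μ : Measure (EuclideanSpace ℝ (Fin d))) [IsProbabilityMeasure μ]
    (R σ τ : ℝ) (hR : 0 ≤ R) (hσ : 0 < σ) (hτ : 0 < τ)
    (hsupp : μ (Metric.closedBall (0 : EuclideanSpace ℝ (Fin d)) R)ᶜ = 0)
    (l : ℝ) (hl0 : 0 < l) (hl1 : l < 1)
    (α2 : ℝ) (hα2 : α2 = σ ^ 2 * (1 - l) + τ ^ 2 * l)
    (p : EuclideanSpace ℝ (Fin d) → ℝ)
    (hp : ∀ x, p x = ∫ u, (∫ w : EuclideanSpace ℝ (Fin d),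
      (2 * Real.pi * τ ^ 2) ^ (-(d : ℝ) / 2) *
        Real.exp (-‖w‖ ^ 2 / (2 * τ ^ 2)) *
      ((2 * Real.pi * (σ ^ 2 * (1 - l))) ^ (-(d : ℝ) / 2) *
        Real.exp (-‖x - Real.sqrt l • (u + w)‖ ^ 2 / (2 * (σ ^ 2 * (1 - l)))))) ∂μ) :
    ∀ (x ξ : EuclideanSpace ℝ (Fin d)),
      -(1 / α2) * ‖ξ‖ ^ 2
        ≤ iteratedFDeriv ℝ 2 (fun y => Real.log (p y)) x ![ξ, ξ] ∧
      iteratedFDeriv ℝ 2 (fun y => Real.log (p y)) x ![ξ, ξ]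
        ≤ -((α2 - l * R ^ 2) / α2 ^ 2) * ‖ξ‖ ^ 2 :=
  gaussian_convolution_hessian_bounds_general μ R σ τ hσ hτ hsupp l hl0 hl1 α2 hα2 p hp
end

section
/- Let π, ν be probability densities e^{−U}, e^{−W} on R^d with e^{−U}, e^{−W} bounded, |∇W| ≤ M_W everywhere, and finite second moments. For λ ∈ (0,1) let p be the density of √λX + √(1−λ)Z, X ~ π, Z ~ ν independent. Then |∇ ln p(x)| ≤ M_W/√(1−λ) for all x. If additionally |∇U| ≤ M_U, then |∇ ln p(x)| ≤ min(M_W/√(1−λ), M_U/√λ). -/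
/-!
Up to the constant factor, `p x = ∫ exp (-φ y - ψ (x - y)) dy` with `φ = U (λ^{-1/2} •)` and
`ψ = W ((1 - λ)^{-1/2} •)`. If `ψ` is `K`-Lipschitz, moving `x` to `x'` changes every integrand
by a factor at most `exp (K ‖x - x'‖)`, so `log p` is `K`-Lipschitz and its gradient has norm at
most `K`. The substitution `y ↦ x - y` swaps the roles of `φ` and `ψ`, which gives the bound in
terms of the Lipschitz constant of `U`.
-/

open MeasureTheory Real
open scoped NNReal

section Gradient

variable {F : Type*} [NormedAddCommGroup F] [InnerProductSpace ℝ F] [CompleteSpace F]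

theorem norm_gradient_eq_norm_fderiv (f : F → ℝ) (x : F) :
    ‖gradient f x‖ = ‖fderiv ℝ f x‖ :=
  (InnerProductSpace.toDual ℝ F).symm.norm_map (fderiv ℝ f x)

theorem lipschitzWith_of_norm_gradient_le {f : F → ℝ} (hf : Differentiable ℝ f) {K : ℝ≥0}
    (h : ∀ x, ‖gradient f x‖ ≤ K) : LipschitzWith K f :=
  lipschitzWith_of_nnnorm_fderiv_le hf fun x => by
    rw [← NNReal.coe_le_coe, coe_nnnorm, ← norm_gradient_eq_norm_fderiv]
    exact h x

theorem norm_gradient_le_of_lipschitzWith {f : F → ℝ} {K : ℝ≥0} (hf : LipschitzWith K f)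
    (x : F) : ‖gradient f x‖ ≤ K := by
  rw [norm_gradient_eq_norm_fderiv]
  exact norm_fderiv_le_of_lipschitz ℝ hf

end Gradient

theorem lipschitzWith_log_of_le_exp_mul {α : Type*} [PseudoMetricSpace α] {q : α → ℝ}
    {K : ℝ≥0} (hq : ∀ x, 0 < q x) (h : ∀ x x', q x ≤ exp (K * dist x x') * q x') :
    LipschitzWith K fun x => log (q x) :=
  LipschitzWith.of_le_add_mul K fun x x' => by
    calc log (q x) ≤ log (exp (K * dist x x') * q x') := log_le_log (hq x) (h x x')
      _ = log (q x') + K * dist x x' := by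
        rw [log_mul (exp_ne_zero _) (hq x').ne', log_exp, add_comm]

section Convolution

variable {E : Type*} [NormedAddCommGroup E] [MeasurableSpace E] {μ : Measure E}
  {φ ψ : E → ℝ}

theorem integral_exp_neg_sub_le_of_lipschitzWith {K : ℝ≥0} (hψ : LipschitzWith K ψ)
    {x x' : E} (hint : Integrable (fun y => exp (-φ y - ψ (x' - y))) μ) :
    ∫ y, exp (-φ y - ψ (x - y)) ∂μ ≤ exp (K * dist x x') * ∫ y, exp (-φ y - ψ (x' - y)) ∂μ := by
  rw [← integral_const_mul]
  refine integral_mono_of_nonneg (.of_forall fun y => (exp_pos _).le) (hint.const_mul _)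
    (.of_forall fun y => ?_)
  dsimp only
  rw [← exp_add, exp_le_exp]
  have := hψ.le_add_mul (x' - y) (x - y)
  rw [dist_sub_right, dist_comm] at this
  linarith

theorem lipschitzWith_log_const_mul_integral_exp_neg_sub [NeZero μ] {c : ℝ} (hc : 0 < c)
    {K : ℝ≥0} (hψ : LipschitzWith K ψ)
    (hint : ∀ x, Integrable (fun y => exp (-φ y - ψ (x - y))) μ) :
    LipschitzWith K fun x => log (c * ∫ y, exp (-φ y - ψ (x - y)) ∂μ) := by
  refine lipschitzWith_log_of_le_exp_mul (fun x => mul_pos hc (integral_exp_pos (hint x)))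
    fun x x' => ?_
  calc c * ∫ y, exp (-φ y - ψ (x - y)) ∂μ
      ≤ c * (exp (K * dist x x') * ∫ y, exp (-φ y - ψ (x' - y)) ∂μ) :=
        mul_le_mul_of_nonneg_left (integral_exp_neg_sub_le_of_lipschitzWith hψ (hint x')) hc.le
    _ = exp (K * dist x x') * (c * ∫ y, exp (-φ y - ψ (x' - y)) ∂μ) := mul_left_comm _ _ _

theorem integrable_exp_neg_sub_of_exp_neg_le [OpensMeasurableSpace E]
    (hφ : Integrable (fun y => exp (-φ y)) μ) (hψ : Continuous ψ) {B : ℝ}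
    (hB : ∀ z, exp (-ψ z) ≤ B) (x : E) :
    Integrable (fun y => exp (-φ y - ψ (x - y))) μ := by
  simp_rw [sub_eq_add_neg (-φ _), exp_add]
  have hψx : Continuous fun y => exp (-ψ (x - y)) := by fun_prop
  exact hφ.mul_bdd (c := B) hψx.aestronglyMeasurable
    (.of_forall fun y => (norm_of_nonneg (exp_pos _).le).trans_le (hB _))

variable [MeasurableAdd E] [MeasurableNeg E] [μ.IsAddLeftInvariant] [μ.IsNegInvariant]

theorem integral_exp_neg_sub_comm (x : E) :
    ∫ y, exp (-φ y - ψ (x - y)) ∂μ = ∫ y, exp (-ψ y - φ (x - y)) ∂μ := by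
  rw [← integral_sub_left_eq_self _ μ x]
  simp_rw [sub_sub_cancel, neg_sub_comm (φ _)]

theorem MeasureTheory.Integrable.exp_neg_sub_comm {x : E}
    (h : Integrable (fun y => exp (-φ y - ψ (x - y))) μ) :
    Integrable (fun y => exp (-ψ y - φ (x - y))) μ := by
  simpa only [sub_sub_cancel, neg_sub_comm (φ _)] using h.comp_sub_left x

end Convolution

theorem score_bound_general {d : ℕ}
    (U W : EuclideanSpace ℝ (Fin d) → ℝ)
    (hUd : Differentiable ℝ U) (hWd : Differentiable ℝ W)
    (hUdens : ∫ x : EuclideanSpace ℝ (Fin d), Real.exp (-U x) = 1)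
    (hWbdd : ∃ B, ∀ x, Real.exp (-W x) ≤ B)
    (MW : ℝ) (hMW : ∀ y, ‖gradient W y‖ ≤ MW)
    (l : ℝ) (hl0 : 0 < l) (hl1 : l < 1)
    (p : EuclideanSpace ℝ (Fin d) → ℝ)
    (hp : ∀ x, p x = (l * (1 - l)) ^ (-(d : ℝ) / 2) *
      ∫ y : EuclideanSpace ℝ (Fin d),
        Real.exp (-U ((Real.sqrt l)⁻¹ • y)
          - W ((Real.sqrt (1 - l))⁻¹ • (x - y)))) :
    (∀ x, ‖gradient (fun y => Real.log (p y)) x‖ ≤ MW / Real.sqrt (1 - l)) ∧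
    (∀ MU : ℝ, (∀ y, ‖gradient U y‖ ≤ MU) →
      ∀ x, ‖gradient (fun y => Real.log (p y)) x‖ ≤
        min (MW / Real.sqrt (1 - l)) (MU / Real.sqrt l)) := by
  obtain ⟨BW, hBW⟩ := hWbdd
  set c := (l * (1 - l)) ^ (-(d : ℝ) / 2)
  set φ : EuclideanSpace ℝ (Fin d) → ℝ := fun y => U ((√l)⁻¹ • y)
  set ψ : EuclideanSpace ℝ (Fin d) → ℝ := fun z => W ((√(1 - l))⁻¹ • z)
  have hc : 0 < c := by
    have : 0 < 1 - l := by linarith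
    positivity
  have hint : ∀ x, Integrable fun y => exp (-φ y - ψ (x - y)) :=
    integrable_exp_neg_sub_of_exp_neg_le
      ((integrable_of_integral_eq_one hUdens).comp_smul (by positivity))
      (hWd.continuous.comp (continuous_const_smul _)) fun z => hBW _
  have hlog_p : (fun y => log (p y)) = fun x => log (c * ∫ y, exp (-φ y - ψ (x - y))) :=
    funext fun x => by rw [hp]
  have hconst : ∀ (M : ℝ≥0) (s : ℝ), ((M * ‖(√s)⁻¹‖₊ : ℝ≥0) : ℝ) = M / √s := fun M s => by
    rw [NNReal.coe_mul, coe_nnnorm, norm_inv, norm_of_nonneg (sqrt_nonneg s), div_eq_mul_inv]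
  lift MW to ℝ≥0 using (norm_nonneg _).trans (hMW 0)
  have bound_W : ∀ x, ‖gradient (fun y => log (p y)) x‖ ≤ MW / √(1 - l) := fun x => by
    rw [hlog_p, ← hconst]
    exact norm_gradient_le_of_lipschitzWith (lipschitzWith_log_const_mul_integral_exp_neg_sub hc
      ((lipschitzWith_of_norm_gradient_le hWd hMW).comp (lipschitzWith_smul _)) hint) x
  refine ⟨bound_W, fun MU hMU x => le_min (bound_W x) ?_⟩
  lift MU to ℝ≥0 using (norm_nonneg _).trans (hMU 0)
  simp_rw [hlog_p, integral_exp_neg_sub_comm (φ := φ), ← hconst]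
  exact norm_gradient_le_of_lipschitzWith (lipschitzWith_log_const_mul_integral_exp_neg_sub hc
    ((lipschitzWith_of_norm_gradient_le hUd hMU).comp (lipschitzWith_smul _))
    fun x => (hint x).exp_neg_sub_comm) x

theorem score_bound {d : ℕ}
    (U W : EuclideanSpace ℝ (Fin d) → ℝ)
    (hUd : Differentiable ℝ U) (hWd : Differentiable ℝ W)
    (hUdens : ∫ x : EuclideanSpace ℝ (Fin d), Real.exp (-U x) = 1)
    (hWdens : ∫ x : EuclideanSpace ℝ (Fin d), Real.exp (-W x) = 1)
    (hUbdd : ∃ B, ∀ x, Real.exp (-U x) ≤ B)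
    (hWbdd : ∃ B, ∀ x, Real.exp (-W x) ≤ B)
    (hU2 : Integrable (fun x : EuclideanSpace ℝ (Fin d) =>
      ‖x‖ ^ 2 * Real.exp (-U x)))
    (hW2 : Integrable (fun x : EuclideanSpace ℝ (Fin d) =>
      ‖x‖ ^ 2 * Real.exp (-W x)))
    (MW : ℝ) (hMW : ∀ y, ‖gradient W y‖ ≤ MW)
    (l : ℝ) (hl0 : 0 < l) (hl1 : l < 1)
    (p : EuclideanSpace ℝ (Fin d) → ℝ)
    (hp : ∀ x, p x = (l * (1 - l)) ^ (-(d : ℝ) / 2) *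
      ∫ y : EuclideanSpace ℝ (Fin d),
        Real.exp (-U ((Real.sqrt l)⁻¹ • y)
          - W ((Real.sqrt (1 - l))⁻¹ • (x - y)))) :
    (∀ x, ‖gradient (fun y => Real.log (p y)) x‖ ≤ MW / Real.sqrt (1 - l)) ∧
    (∀ MU : ℝ, (∀ y, ‖gradient U y‖ ≤ MU) →
      ∀ x, ‖gradient (fun y => Real.log (p y)) x‖ ≤
        min (MW / Real.sqrt (1 - l)) (MU / Real.sqrt l)) :=
  score_bound_general U W hUd hWd hUdens hWbdd MW hMW l hl0 hl1 p hp
end
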